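/- Let P and Q be simple graphs of orders p and q respectively, each 2-connected, not complete, and not bipartite. Form a signed graph Σ as follows: take P with all edges positive, Q with all edges negative, and add all pq edges between V(P) and V(Q), each positive (so the added edges form an all-positive complete bipartite graph K_{p,q}). Then Σ is not balanced, not antibalanced, and not geodetic, but Σ is distance-compatible (indeed Σ has diameter 2 and every shortest path between non-adjacent vertices is positive). -/

import Mathlib

/-!
Two vertices of `Σ` on different sides are adjacent, and two vertices on the same side have
every vertex of the other side as a common neighbour; hence `Σ` has diameter 2 and every
shortest path between non-adjacent vertices `u, v` is `u w v` with `u, v` on the same side.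
Such a path is positive: either it crosses twice along positive edges, or it stays on one side
and uses two edges of the same sign. A non-edge of `P` with two vertices of an edge of `Q` as
middle vertices gives two distinct shortest paths. Finally, a triangle through an edge of `Q`
is negative, while a triangle through an edge of `P` is a positive odd cycle.
-/

open SimpleGraph

/-- The sign (product of edge signs) of a walk in a graph, computed along its darts. -/
def walkSign {V : Type*} {G : SimpleGraph V} (σ : V → V → ℤ) {u v : V} (p : G.Walk u v) : ℤ :=
  (p.darts.map fun d => σ d.toProd.1 d.toProd.2).prod

/-- `σ` is a signature on `G`: a symmetric function that is `±1`-valued on edges. -/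
def IsSignature {V : Type*} (G : SimpleGraph V) (σ : V → V → ℤ) : Prop :=
  (∀ u v, σ u v = σ v u) ∧ ∀ u v, G.Adj u v → σ u v = 1 ∨ σ u v = -1

/-- A signed graph is balanced when every cycle has sign `+1`. -/
def IsBalanced {V : Type*} (G : SimpleGraph V) (σ : V → V → ℤ) : Prop :=
  ∀ (u : V) (p : G.Walk u u), p.IsCycle → walkSign σ p = 1

/-- A walk is a shortest path when it is a path whose length is the graph distance
between its endpoints. -/
def IsShortestPath {V : Type*} {G : SimpleGraph V} {u v : V} (p : G.Walk u v) : Prop :=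
  p.IsPath ∧ p.length = G.dist u v

open scoped Classical in
/-- `σmax u v = +1` if some shortest `u v`-path is positive, `-1` otherwise. -/
noncomputable def sigmaMax {V : Type*} (G : SimpleGraph V) (σ : V → V → ℤ) (u v : V) : ℤ :=
  if ∃ p : G.Walk u v, IsShortestPath p ∧ walkSign σ p = 1 then 1 else -1

open scoped Classical in
/-- `σmin u v = +1` if all shortest `u v`-paths are positive, `-1` otherwise. -/
noncomputable def sigmaMin {V : Type*} (G : SimpleGraph V) (σ : V → V → ℤ) (u v : V) : ℤ :=
  if ∀ p : G.Walk u v, IsShortestPath p → walkSign σ p = 1 then 1 else -1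

/-- The signed distance matrix `D^max`, with `(u,v)` entry `σmax(u,v)·d(u,v)`. -/
noncomputable def Dmax {V : Type*} (G : SimpleGraph V) (σ : V → V → ℤ) : Matrix V V ℝ :=
  Matrix.of fun u v => (sigmaMax G σ u v : ℝ) * (G.dist u v : ℝ)

/-- The signed distance matrix `D^min`, with `(u,v)` entry `σmin(u,v)·d(u,v)`. -/
noncomputable def Dmin {V : Type*} (G : SimpleGraph V) (σ : V → V → ℤ) : Matrix V V ℝ :=
  Matrix.of fun u v => (sigmaMin G σ u v : ℝ) * (G.dist u v : ℝ)

/-- Two vertices are distance-compatible if all shortest paths between them have the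
same sign. -/
def Compatible {V : Type*} (G : SimpleGraph V) (σ : V → V → ℤ) (u v : V) : Prop :=
  ∀ p q : G.Walk u v, IsShortestPath p → IsShortestPath q → walkSign σ p = walkSign σ q

/-- A signed graph is distance-compatible if every pair of vertices is
distance-compatible. -/
def IsCompatibleGraph {V : Type*} (G : SimpleGraph V) (σ : V → V → ℤ) : Prop :=
  ∀ u v, Compatible G σ u v

/-- The largest eigenvalue of a (symmetric) real matrix: the supremum of the set of real
roots of its characteristic polynomial. -/
noncomputable def largestEigenvalue {n : Type*} [Fintype n] [DecidableEq n]
    (M : Matrix n n ℝ) : ℝ :=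
  sSup {x : ℝ | M.charpoly.IsRoot x}

/-- A finite graph is 2-connected: it has at least 3 vertices and deleting any single
vertex leaves it connected. -/
def TwoConnected {W : Type*} [Fintype W] (H : SimpleGraph W) : Prop :=
  3 ≤ Fintype.card W ∧ ∀ v : W, (H.induce {w | w ≠ v}).Connected

/-- A graph is geodetic if every pair of vertices is joined by a unique shortest path. -/
def IsGeodetic {V : Type*} (G : SimpleGraph V) : Prop :=
  ∀ (u v : V) (p q : G.Walk u v), IsShortestPath p → IsShortestPath q → p = q

/-- The join of two graphs `P` and `Q` across a complete bipartite graph: all `pq` edges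
between `V(P)` and `V(Q)` are added. -/
def sumJoin {α β : Type*} (P : SimpleGraph α) (Q : SimpleGraph β) :
    SimpleGraph (α ⊕ β) where
  Adj u v :=
    match u, v with
    | Sum.inl a, Sum.inl a' => P.Adj a a'
    | Sum.inr b, Sum.inr b' => Q.Adj b b'
    | Sum.inl _, Sum.inr _ => True
    | Sum.inr _, Sum.inl _ => True
  symm := by
    constructor
    rintro (a | a) (b | b) h
    · exact P.adj_symm h
    · trivial
    · trivial
    · exact Q.adj_symm h
  loopless := by
    constructor
    rintro (a | a) h
    · exact P.irrefl h
    · exact Q.irrefl h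

/-- The signature making all edges of `P` and all cross edges positive, and all edges of
`Q` negative. -/
def mixedSign {α β : Type*} : (α ⊕ β) → (α ⊕ β) → ℤ
  | Sum.inr _, Sum.inr _ => -1
  | _, _ => 1

namespace SimpleGraph

variable {V : Type*} {G : SimpleGraph V} {u v w : V}

lemma exists_adj_of_not_colorable {n : ℕ} (hn : 1 ≤ n) (h : ¬ G.Colorable n) :
    ∃ a b, G.Adj a b := by
  by_contra! hG
  exact h ((colorable_one_iff.mpr (eq_bot_iff_forall_not_adj.mpr hG)).mono hn)

lemma dist_le_two_of_adj_of_adj (h₁ : G.Adj u w) (h₂ : G.Adj w v) : G.dist u v ≤ 2 := by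
  simpa using G.dist_le (.cons h₁ (.cons h₂ .nil))

lemma dist_eq_two_of_adj_of_adj (huv : u ≠ v) (hna : ¬ G.Adj u v) (h₁ : G.Adj u w)
    (h₂ : G.Adj w v) : G.dist u v = 2 := by
  simp [dist, edist_eq_two_iff.mpr ⟨huv, hna, w, h₁, h₂.symm⟩]

namespace Walk

lemma eq_of_length_eq_one {p q : G.Walk u v} (hp : p.length = 1) (hq : q.length = 1) :
    p = q := by
  match p, q, hp, hq with
  | cons _ nil, cons _ nil, _, _ => rfl

lemma exists_eq_cons_cons_nil_of_length_eq_two {p : G.Walk u v} (hp : p.length = 2) :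
    ∃ w, ∃ (h₁ : G.Adj u w) (h₂ : G.Adj w v), p = cons h₁ (cons h₂ nil) := by
  match p, hp with
  | cons h₁ (cons h₂ nil), _ => exact ⟨_, h₁, h₂, rfl⟩

lemma isCycle_triangle {a b c : V} (hab : G.Adj a b) (hbc : G.Adj b c) (hca : G.Adj c a) :
    (cons hab (cons hbc (cons hca nil))).IsCycle := by
  rw [cons_isCycle_iff]
  simp [hbc.ne, hca.ne, hca.ne', hab.ne']

end Walk

end SimpleGraph

section SignedGraph

variable {V : Type*} {G : SimpleGraph V} {σ : V → V → ℤ} {u v w : V}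

@[simp]
lemma walkSign_nil : walkSign σ (Walk.nil : G.Walk u u) = 1 := rfl

@[simp]
lemma walkSign_cons (h : G.Adj u v) (p : G.Walk v w) :
    walkSign σ (Walk.cons h p) = σ u v * walkSign σ p := by
  simp [walkSign]

lemma not_isBalanced_of_triangle {a b c : V} (hab : G.Adj a b) (hbc : G.Adj b c)
    (hca : G.Adj c a) (hσ : σ a b * σ b c * σ c a ≠ 1) : ¬ IsBalanced G σ := fun hbal => by
  have := hbal a _ (Walk.isCycle_triangle hab hbc hca)
  simp only [walkSign_cons, walkSign_nil, mul_one] at this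
  exact hσ (by rw [mul_assoc, this])

lemma isShortestPath_cons_cons (huv : u ≠ v) (hna : ¬ G.Adj u v) (h₁ : G.Adj u w)
    (h₂ : G.Adj w v) : IsShortestPath (Walk.cons h₁ (Walk.cons h₂ Walk.nil)) :=
  ⟨by simp [huv, h₁.ne, h₂.ne], by simp [dist_eq_two_of_adj_of_adj huv hna h₁ h₂]⟩

lemma not_isGeodetic_of_two_common_adj {w' : V} (huv : u ≠ v) (hna : ¬ G.Adj u v)
    (hw : w ≠ w') (h₁ : G.Adj u w) (h₂ : G.Adj w v) (h₁' : G.Adj u w') (h₂' : G.Adj w' v) :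
    ¬ IsGeodetic G := fun hgeo => by
  have := hgeo u v _ _ (isShortestPath_cons_cons huv hna h₁ h₂)
    (isShortestPath_cons_cons huv hna h₁' h₂')
  simp only [Walk.cons.injEq] at this
  exact hw this.1

lemma compatible_of_adj (h : G.Adj u v) : Compatible G σ u v := fun p q hp hq => by
  rw [Walk.eq_of_length_eq_one (hp.2.trans (dist_eq_one_iff_adj.mpr h))
    (hq.2.trans (dist_eq_one_iff_adj.mpr h))]

lemma isCompatibleGraph_of_walkSign_eq_one
    (h : ∀ u v, ¬ G.Adj u v → ∀ p : G.Walk u v, IsShortestPath p → walkSign σ p = 1) :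
    IsCompatibleGraph G σ := fun u v p q hp hq => by
  by_cases huv : G.Adj u v
  · exact compatible_of_adj huv p q hp hq
  · rw [h u v huv p hp, h u v huv q hq]

end SignedGraph

section Join

variable {α β : Type*} {P : SimpleGraph α} {Q : SimpleGraph β}

lemma sumJoin_adj_of_isLeft_ne {x y : α ⊕ β} (h : x.isLeft ≠ y.isLeft) :
    (sumJoin P Q).Adj x y := by
  rcases x with _ | _ <;> rcases y with _ | _ <;> first | exact (h rfl).elim | trivial

lemma isLeft_eq_of_not_sumJoin_adj {x y : α ⊕ β} (h : ¬ (sumJoin P Q).Adj x y) :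
    x.isLeft = y.isLeft :=
  not_imp_comm.mp sumJoin_adj_of_isLeft_ne h

lemma mixedSign_mul_mixedSign {x z : α ⊕ β} (h : x.isLeft = z.isLeft) (y : α ⊕ β) :
    mixedSign x y * mixedSign y z = 1 := by
  rcases x with _ | _ <;> rcases y with _ | _ <;> rcases z with _ | _ <;>
    first | rfl | simp at h

variable [Nonempty α] [Nonempty β]

lemma sumJoin_exists_common_adj {x y : α ⊕ β} (h : x.isLeft = y.isLeft) :
    ∃ w, (sumJoin P Q).Adj x w ∧ (sumJoin P Q).Adj w y := by
  rcases x with _ | _ <;> rcases y with _ | _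
  · exact ⟨.inr (Classical.arbitrary β), trivial, trivial⟩
  · simp at h
  · simp at h
  · exact ⟨.inl (Classical.arbitrary α), trivial, trivial⟩

lemma sumJoin_dist_le_two (x y : α ⊕ β) : (sumJoin P Q).dist x y ≤ 2 := by
  by_cases h : x.isLeft = y.isLeft
  · obtain ⟨w, h₁, h₂⟩ := sumJoin_exists_common_adj h
    exact dist_le_two_of_adj_of_adj h₁ h₂
  · rw [dist_eq_one_iff_adj.mpr (sumJoin_adj_of_isLeft_ne h)]
    omega

lemma sumJoin_dist_eq_two {x y : α ⊕ β} (hxy : x ≠ y) (hna : ¬ (sumJoin P Q).Adj x y) :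
    (sumJoin P Q).dist x y = 2 :=
  have ⟨_, h₁, h₂⟩ := sumJoin_exists_common_adj (isLeft_eq_of_not_sumJoin_adj hna)
  dist_eq_two_of_adj_of_adj hxy hna h₁ h₂

lemma walkSign_mixedSign_of_not_adj {x y : α ⊕ β} (hna : ¬ (sumJoin P Q).Adj x y)
    (p : (sumJoin P Q).Walk x y) (hp : IsShortestPath p) : walkSign mixedSign p = 1 := by
  by_cases hxy : x = y
  · subst hxy
    have hnil := hp.2
    rw [SimpleGraph.dist_self, Walk.length_eq_zero_iff] at hnil
    rw [hnil.eq_nil, walkSign_nil]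
  · obtain ⟨w, h₁, h₂, rfl⟩ :=
      Walk.exists_eq_cons_cons_nil_of_length_eq_two (hp.2.trans (sumJoin_dist_eq_two hxy hna))
    simpa using mixedSign_mul_mixedSign (isLeft_eq_of_not_sumJoin_adj hna) w

end Join

theorem join_construction_compatible_general {α β : Type*}
    (P : SimpleGraph α) (Q : SimpleGraph β)
    (hPnc : P ≠ ⊤)
    (hPnb : ¬ P.Colorable 2) (hQnb : ¬ Q.Colorable 2) :
    ¬ IsBalanced (sumJoin P Q) mixedSign ∧
    ¬ IsBalanced (sumJoin P Q) (fun x y => -(mixedSign x y)) ∧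
    ¬ IsGeodetic (sumJoin P Q) ∧
    IsCompatibleGraph (sumJoin P Q) mixedSign ∧
    (∀ u v : α ⊕ β, (sumJoin P Q).dist u v ≤ 2) ∧
    (∃ u v : α ⊕ β, (sumJoin P Q).dist u v = 2) ∧
    (∀ u v : α ⊕ β, ¬ (sumJoin P Q).Adj u v →
      ∀ p : (sumJoin P Q).Walk u v, IsShortestPath p → walkSign mixedSign p = 1) := by
  obtain ⟨a₁, a₂, ha, hna⟩ := ne_top_iff_exists_not_adj.mp hPnc
  obtain ⟨a, a', hP⟩ := exists_adj_of_not_colorable one_le_two hPnb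
  obtain ⟨b, b', hQ⟩ := exists_adj_of_not_colorable one_le_two hQnb
  have : Nonempty α := ⟨a⟩
  have : Nonempty β := ⟨b⟩
  have hna' : ¬ (sumJoin P Q).Adj (.inl a₁) (.inl a₂) := hna
  have ha' : (Sum.inl a₁ : α ⊕ β) ≠ .inl a₂ := Sum.inl_injective.ne ha
  refine ⟨not_isBalanced_of_triangle (a := .inr b) (b := .inr b') (c := .inl a) hQ trivial trivial
      (by simp [mixedSign]),
    not_isBalanced_of_triangle (a := .inl a) (b := .inl a') (c := .inr b) hP trivial trivial
      (by simp [mixedSign]),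
    not_isGeodetic_of_two_common_adj ha' hna' (Sum.inr_injective.ne hQ.ne)
      trivial trivial trivial trivial,
    isCompatibleGraph_of_walkSign_eq_one fun _ _ => walkSign_mixedSign_of_not_adj,
    sumJoin_dist_le_two, ⟨_, _, sumJoin_dist_eq_two ha' hna'⟩,
    fun _ _ => walkSign_mixedSign_of_not_adj⟩

/-- Let `P` and `Q` be finite simple graphs, each 2-connected, not
complete and not bipartite.  Sign `P` all positive, `Q` all negative, and join them by an
all-positive complete bipartite graph `K_{p,q}`.  The resulting signed graph `Σ` is not
balanced, not antibalanced and not geodetic, but it is distance-compatible; indeed `Σ`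
has diameter `2` and every shortest path between non-adjacent vertices is positive. -/
theorem join_construction_compatible {α β : Type*} [Fintype α] [Fintype β]
    (P : SimpleGraph α) (Q : SimpleGraph β)
    (hP2 : TwoConnected P) (hQ2 : TwoConnected Q)
    (hPnc : P ≠ ⊤) (hQnc : Q ≠ ⊤)
    (hPnb : ¬ P.Colorable 2) (hQnb : ¬ Q.Colorable 2) :
    ¬ IsBalanced (sumJoin P Q) mixedSign ∧
    ¬ IsBalanced (sumJoin P Q) (fun x y => -(mixedSign x y)) ∧
    ¬ IsGeodetic (sumJoin P Q) ∧
    IsCompatibleGraph (sumJoin P Q) mixedSign ∧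
    (∀ u v : α ⊕ β, (sumJoin P Q).dist u v ≤ 2) ∧
    (∃ u v : α ⊕ β, (sumJoin P Q).dist u v = 2) ∧
    (∀ u v : α ⊕ β, ¬ (sumJoin P Q).Adj u v →
      ∀ p : (sumJoin P Q).Walk u v, IsShortestPath p → walkSign mixedSign p = 1) :=
  join_construction_compatible_general P Q hPnc hPnb hQnb
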